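/- For s, s' ≥ 1, t_s divides t_{s'} (over ℤ) if and only if s divides s' and s'/s is odd. -/

import Mathlib

/-!
`t n` is the rescaled Chebyshev polynomial `Polynomial.Chebyshev.C ℤ n`, of degree `|n|` for every
integer `n`. The product formula `C m * C s = C (m + s) + C (m - s)` gives `C (m + 2s) ≡ -C m`
modulo `C s`, so whether `C s ∣ C m` depends only on `m` modulo `2s`. A residue `r ≠ s` in
`[0, 2s)` is congruent to `r` or to `r - 2s`, both of absolute value `< s`, and there a degree count
rules divisibility out.
-/

open Polynomial

noncomputable def t : ℕ → Polynomial ℤ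
  | 0 => 2
  | 1 => X
  | (n + 2) => X * t (n + 1) - t n

namespace Polynomial.Chebyshev

variable {R : Type*} [CommRing R]

theorem C_dvd_C_add_two_mul_iff (s m : ℤ) : C R s ∣ C R (m + 2 * s) ↔ C R s ∣ C R m := by
  rw [← dvd_neg (a := C R s) (b := C R m)]
  refine dvd_iff_dvd_of_dvd_sub ?_
  have h : C R s ∣ C R (m + s + s) + C R (m + s - s) := Dvd.intro_left _ (C_mul_C R (m + s) s)
  rwa [add_assoc, ← two_mul, add_sub_cancel_right, ← sub_neg_eq_add] at h

theorem C_dvd_C_add_two_mul_mul_iff (s m k : ℤ) :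
    C R s ∣ C R (m + 2 * s * k) ↔ C R s ∣ C R m := by
  induction k using Int.induction_on with
  | zero => simp
  | succ k ih =>
    rw [← ih, ← C_dvd_C_add_two_mul_iff s (m + 2 * s * k)]
    ring_nf
  | pred k ih =>
    rw [← ih, ← C_dvd_C_add_two_mul_iff s (m + 2 * s * (-k - 1))]
    ring_nf

variable [NeZero (2 : R)]

theorem C_ne_zero (n : ℤ) : C R n ≠ 0 :=
  fun h => two_ne_zero (α := R) (by simpa [h] using (C_eval_two R n).symm)

variable [IsDomain R]

theorem natDegree_C (n : ℤ) : (C R n).natDegree = n.natAbs := by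
  have h := congrArg natDegree (C_comp_two_mul_X R n)
  rwa [← C_ofNat, natDegree_comp, natDegree_C_mul_X _ two_ne_zero, natDegree_C_mul two_ne_zero,
    natDegree_T, mul_one] at h

theorem not_C_dvd_C_of_natAbs_lt {s m : ℤ} (h : m.natAbs < s.natAbs) : ¬ C R s ∣ C R m := by
  intro hdvd
  have := natDegree_le_of_dvd hdvd (C_ne_zero m)
  rw [natDegree_C, natDegree_C] at this
  omega

theorem C_dvd_C_iff {s : ℤ} (hs : 0 < s) (m : ℤ) : C R s ∣ C R m ↔ m % (2 * s) = s := by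
  conv_lhs => rw [← Int.emod_add_mul_ediv m (2 * s), C_dvd_C_add_two_mul_mul_iff]
  have hr0 : 0 ≤ m % (2 * s) := Int.emod_nonneg _ (by omega)
  have hr : m % (2 * s) < 2 * s := Int.emod_lt_of_pos _ (by omega)
  rcases lt_trichotomy (m % (2 * s)) s with hlt | heq | hgt
  · exact iff_of_false (not_C_dvd_C_of_natAbs_lt (by omega)) hlt.ne
  · simp [heq]
  · rw [← C_dvd_C_add_two_mul_mul_iff s _ (-1)]
    exact iff_of_false (not_C_dvd_C_of_natAbs_lt (by omega)) hgt.ne'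

end Polynomial.Chebyshev

theorem t_eq_chebyshevC : ∀ n : ℕ, t n = Chebyshev.C ℤ n
  | 0 => by simp [t]
  | 1 => by simp [t]
  | n + 2 => by
    rw [t, t_eq_chebyshevC (n + 1), t_eq_chebyshevC n]
    push_cast
    exact (Chebyshev.C_add_two ℤ n).symm

theorem Nat.mod_two_mul_eq_self_iff {s n : ℕ} (hs : 0 < s) :
    n % (2 * s) = s ↔ s ∣ n ∧ Odd (n / s) := by
  rw [mul_comm, Nat.mod_mul, Nat.dvd_iff_mod_eq_zero, Nat.odd_iff]
  have := Nat.mod_lt n hs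
  rcases Nat.mod_two_eq_zero_or_one (n / s) with h | h
  · simp only [h, mul_zero, add_zero, zero_ne_one, and_false, iff_false]
    omega
  · simp only [h, mul_one, and_true]
    omega

theorem stmt_16_general (s s' : ℕ) (hs : 1 ≤ s) :
    t s ∣ t s' ↔ s ∣ s' ∧ Odd (s' / s) := by
  rw [t_eq_chebyshevC, t_eq_chebyshevC, Chebyshev.C_dvd_C_iff (by omega),
    ← Nat.mod_two_mul_eq_self_iff hs]
  exact_mod_cast Iff.rfl

theorem stmt_16 (s s' : ℕ) (hs : 1 ≤ s) (hs' : 1 ≤ s') :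
    t s ∣ t s' ↔ s ∣ s' ∧ Odd (s' / s) :=
  stmt_16_general s s' hs
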